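/- There exist constants C3 > 0 and c > 0 such that, for all sufficiently large n divisible by 4, ∑_{j ∈ ℤ, t0 < |j| ≤ n/8} Pr(G = n/4 − j) · exp( 16·j² / (C3·n·log n) ) ≤ exp( −c·√(log n) ); in particular this sum tends to 0 as n → ∞ along multiples of 4. -/

import Mathlib

/-!
Write `n = 4h` and `a = |j|`, so that `Pr(G = h - j) = C(2h, h - a)² / C(4h, 2h)`. Stirling's
bounds `√π ≤ stirlingSeq ≤ e / √2` give `C(2h, h)² / C(4h, 2h) = O(1 / √h)`, and the ratio of
consecutive binomial coefficients `(h - a) / (h + a + 1) ≤ exp (-(2a + 1) / (h + a + 1))` gives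
`C(2h, h - a) ≤ C(2h, h) · exp (-a² / (h + a))`. With `C3 = 1`, `a ≤ h / 2` and `log n ≥ 5`, each
summand is therefore at most `(32 / √h) · exp (-a² / 2h)`. Since `a > t0`, both `a² / 4h ≥ √(log n)`
and `a² / 4h ≥ a / (2√h)`, so the summand is at most `(32 / √h) · e^{-√(log n)} · e^{-a / (2√h)}`,
and the geometric sum over `j` contributes a factor `O(√h)`: the tail sum is `O(e^{-√(log n)})`.
-/

open scoped Classical
open Finset Filter

/-- `pG n k` is `Pr(G = k)` for the hypergeometric random variable `G(n, n/2, n/2)`,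
extended by `0` outside `{0, …, n/2}` (here `k : ℤ`). -/
noncomputable def pG (n : ℕ) (k : ℤ) : ℝ :=
  if 0 ≤ k then (((n / 2).choose k.toNat : ℝ)) ^ 2 / (n.choose (n / 2) : ℝ) else 0

/-- `t0 = √n · (log n)^{1/4}`. -/
noncomputable def t0 (n : ℕ) : ℝ := Real.sqrt n * Real.log n ^ ((1 : ℝ) / 4)

/-- The tail sum `∑_{t0 < |j| ≤ n/8} Pr(G = n/4 − j) · exp(16j²/(C3 n log n))`. -/
noncomputable def tailSum (C3 : ℝ) (n : ℕ) : ℝ :=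
  ∑ j ∈ (Finset.Icc (-(n : ℤ)) (n : ℤ)).filter
      (fun j : ℤ => t0 n < |(j : ℝ)| ∧ |(j : ℝ)| ≤ (n : ℝ) / 8),
    pG n (((n / 4 : ℕ) : ℤ) - j) * Real.exp (16 * (j : ℝ) ^ 2 / (C3 * n * Real.log n))

open Real Stirling
open scoped Nat

theorem factorial_eq_stirlingSeq_mul {m : ℕ} (hm : m ≠ 0) :
    (m ! : ℝ) = stirlingSeq m * (√(2 * m) * (m / exp 1) ^ m) := by
  rw [stirlingSeq, div_mul_cancel₀]
  positivity

theorem centralBinom_mul_sqrt_mul_stirlingSeq_sq {n : ℕ} (hn : n ≠ 0) :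
    (n.centralBinom : ℝ) * √n * stirlingSeq n ^ 2 = stirlingSeq (2 * n) * 4 ^ n := by
  have hc : (n.centralBinom : ℝ) * (n ! : ℝ) ^ 2 = ((2 * n) ! : ℝ) := by
    rw [Nat.centralBinom_eq_two_mul_choose, sq]
    have := Nat.choose_mul_factorial_mul_factorial (by omega : n ≤ 2 * n)
    rw [show 2 * n - n = n by omega, mul_assoc] at this
    exact_mod_cast this
  rw [factorial_eq_stirlingSeq_mul hn, factorial_eq_stirlingSeq_mul (by omega)] at hc
  have hs : √(2 * ((2 * n : ℕ) : ℝ)) = 2 * √n := by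
    push_cast
    rw [show (2 * (2 * (n : ℝ))) = 2 ^ 2 * n by ring, sqrt_mul (by positivity),
      sqrt_sq (by norm_num)]
  have hp : (((2 * n : ℕ) : ℝ) / exp 1) ^ (2 * n) = 4 ^ n * ((n / exp 1) ^ n) ^ 2 := by
    rw [pow_mul, ← pow_mul _ n 2, mul_comm n 2, pow_mul, ← mul_pow]
    congr 1; push_cast; ring
  have hnpos : (0 : ℝ) < n := by positivity
  have hsq : 0 < √(n : ℝ) := sqrt_pos.mpr hnpos
  rw [hs, hp, mul_pow, mul_pow, sq_sqrt (by positivity)] at hc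
  apply mul_right_cancel₀ hsq.ne'
  field_simp at hc
  linear_combination hc + (n.centralBinom * stirlingSeq n ^ 2 : ℝ) * sq_sqrt hnpos.le

theorem one_le_stirlingSeq {n : ℕ} (hn : n ≠ 0) : 1 ≤ stirlingSeq n :=
  le_trans (one_le_sqrt.mpr (by linarith [pi_gt_three])) (sqrt_pi_le_stirlingSeq hn)

theorem stirlingSeq_le_two {n : ℕ} (hn : n ≠ 0) : stirlingSeq n ≤ 2 := by
  obtain ⟨m, rfl⟩ := Nat.exists_eq_succ_of_ne_zero hn
  calc stirlingSeq (m + 1) ≤ stirlingSeq 1 := stirlingSeq'_antitone (Nat.zero_le m)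
    _ = exp 1 / √2 := stirlingSeq_one
    _ ≤ 2 := by
      rw [div_le_iff₀ (by positivity)]
      nlinarith [sq_sqrt (zero_le_two : (0 : ℝ) ≤ 2), sqrt_nonneg 2, exp_one_lt_d9]

theorem centralBinom_sq_div_centralBinom_two_mul_le {m : ℕ} (hm : m ≠ 0) :
    (m.centralBinom : ℝ) ^ 2 / (2 * m).centralBinom ≤ 32 / √m := by
  have h1 := centralBinom_mul_sqrt_mul_stirlingSeq_sq hm
  have h2 := centralBinom_mul_sqrt_mul_stirlingSeq_sq (n := 2 * m) (by omega)
  have hS1 := one_le_stirlingSeq hm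
  have hS4 := one_le_stirlingSeq (n := 2 * (2 * m)) (by omega)
  have hS2 := stirlingSeq_le_two (n := 2 * m) (by omega)
  have hS2pos : 0 < stirlingSeq (2 * m) := by linarith [one_le_stirlingSeq (n := 2 * m) (by omega)]
  have hmpos : (0 : ℝ) < m := by positivity
  have hsm : 0 < √(m : ℝ) := sqrt_pos.mpr hmpos
  have hs2m : √((2 * m : ℕ) : ℝ) = √2 * √m := by push_cast; exact sqrt_mul zero_le_two _
  rw [hs2m, pow_mul'] at h2
  have e1 : (m.centralBinom : ℝ) = stirlingSeq (2 * m) * 4 ^ m / (√m * stirlingSeq m ^ 2) := by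
    rw [eq_div_iff (by positivity)]; linear_combination h1
  have e2 : ((2 * m).centralBinom : ℝ)
      = stirlingSeq (2 * (2 * m)) * (4 ^ m) ^ 2 / (√2 * √m * stirlingSeq (2 * m) ^ 2) := by
    rw [eq_div_iff (by positivity)]; linear_combination h2
  rw [e1, e2, div_le_div_iff₀ (by positivity) hsm]
  -- the powers of `4` and of `√m` cancel
  field_simp
  have hS2pow : stirlingSeq (2 * m) ^ 4 ≤ 2 ^ 4 := pow_le_pow_left₀ hS2pos.le hS2 4
  have hS1pow : 1 ≤ stirlingSeq m ^ 4 := one_le_pow₀ hS1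
  have hsqrt2 : √2 ≤ 2 := by rw [sqrt_le_left (by norm_num)]; norm_num
  calc stirlingSeq (2 * m) ^ 4 * √2 ≤ 2 ^ 4 * 2 := by gcongr
    _ = 1 * 32 * 1 := by norm_num
    _ ≤ stirlingSeq m ^ 4 * 32 * stirlingSeq (2 * (2 * m)) := by gcongr

theorem choose_sub_le_centralBinom_mul_exp {h a : ℕ} (ha : a ≤ h) :
    ((2 * h).choose (h - a) : ℝ) ≤ h.centralBinom * exp (-((a : ℝ) ^ 2 / (h + a))) := by
  induction a with
  | zero => simp [Nat.centralBinom_eq_two_mul_choose]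
  | succ a ih =>
    have hrec : ((2 * h).choose (h - (a + 1)) : ℝ) * (h + a + 1)
        = (2 * h).choose (h - a) * (h - a) := by
      have := Nat.choose_succ_right_eq (2 * h) (h - (a + 1))
      rw [show h - (a + 1) + 1 = h - a by omega, show 2 * h - (h - (a + 1)) = h + a + 1 by omega]
        at this
      have hcast : ((h - a : ℕ) : ℝ) = h - a := by rw [Nat.cast_sub (by omega)]
      rw [← hcast]
      exact_mod_cast this.symm
    have hpos : (0 : ℝ) < h + a + 1 := by positivity
    have hratio : ((h : ℝ) - a) / (h + a + 1) ≤ exp (-((2 * a + 1) / (h + a + 1))) := by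
      have hsplit : ((h : ℝ) - a) / (h + a + 1) = -((2 * a + 1) / (h + a + 1)) + 1 := by
        field_simp; ring
      rw [hsplit]
      exact add_one_le_exp _
    have hah : (a : ℝ) + 1 ≤ h := by exact_mod_cast ha
    have hexp : ((a + 1 : ℕ) : ℝ) ^ 2 / (h + (a + 1 : ℕ))
        ≤ (a : ℝ) ^ 2 / (h + a) + (2 * a + 1) / (h + a + 1) := by
      have hmono : (a : ℝ) ^ 2 / (h + a + 1) ≤ (a : ℝ) ^ 2 / (h + a) :=
        div_le_div_of_nonneg_left (by positivity) (by linarith) (by linarith)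
      have hsplit : ((a + 1 : ℕ) : ℝ) ^ 2 / (h + (a + 1 : ℕ))
          = (a : ℝ) ^ 2 / (h + a + 1) + (2 * a + 1) / (h + a + 1) := by
        push_cast; field_simp; ring
      linarith
    calc ((2 * h).choose (h - (a + 1)) : ℝ)
        = (2 * h).choose (h - a) * ((h - a) / (h + a + 1)) := by
          rw [← mul_div_assoc, ← hrec, mul_div_cancel_right₀ _ hpos.ne']
      _ ≤ h.centralBinom * exp (-((a : ℝ) ^ 2 / (h + a))) * exp (-((2 * a + 1) / (h + a + 1))) := by
          gcongr
          · exact div_nonneg (by linarith) hpos.le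
          · exact ih (by omega)
      _ ≤ h.centralBinom * exp (-(((a + 1 : ℕ) : ℝ) ^ 2 / (h + (a + 1 : ℕ)))) := by
          rw [mul_assoc, ← exp_add]
          gcongr
          linarith

theorem natAbs_neg_natCast_add_one (n : ℕ) : (-((n : ℤ) + 1)).natAbs = n + 1 := by omega

theorem summable_pow_natAbs {r : ℝ} (h0 : 0 ≤ r) (h1 : r < 1) :
    Summable (fun j : ℤ => r ^ j.natAbs) := by
  have hgeom := summable_geometric_of_lt_one h0 h1
  refine .of_nat_of_neg_add_one ?_ ?_
  · simpa using hgeom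
  · simpa only [natAbs_neg_natCast_add_one] using (summable_nat_add_iff 1).mpr hgeom

theorem tsum_pow_natAbs {r : ℝ} (h0 : 0 ≤ r) (h1 : r < 1) :
    ∑' j : ℤ, r ^ j.natAbs = (1 + r) / (1 - r) := by
  have hgeom := summable_geometric_of_lt_one h0 h1
  rw [tsum_of_nat_of_neg_add_one (by simpa using hgeom)
    (by simpa only [natAbs_neg_natCast_add_one] using (summable_nat_add_iff 1).mpr hgeom)]
  simp only [Int.natAbs_natCast, natAbs_neg_natCast_add_one, pow_succ, tsum_mul_right,
    tsum_geometric_of_lt_one h0 h1]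
  field_simp

theorem sum_exp_neg_mul_abs_le (s : Finset ℤ) {x : ℝ} (hx : 0 < x) :
    ∑ j ∈ s, exp (-(x * |(j : ℝ)|)) ≤ 1 + 2 / x := by
  have hr1 : exp (-x) < 1 := exp_lt_one_iff.mpr (by linarith)
  have hterm : ∀ j : ℤ, exp (-(x * |(j : ℝ)|)) = exp (-x) ^ j.natAbs := by
    intro j
    rw [← exp_nat_mul, Nat.cast_natAbs, Int.cast_abs]
    ring_nf
  simp only [hterm]
  calc ∑ j ∈ s, exp (-x) ^ j.natAbs ≤ ∑' j : ℤ, exp (-x) ^ j.natAbs :=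
        (summable_pow_natAbs (exp_pos _).le hr1).sum_le_tsum s (fun _ _ => by positivity)
    _ = (1 + exp (-x)) / (1 - exp (-x)) := tsum_pow_natAbs (exp_pos _).le hr1
    _ ≤ 1 + 2 / x := by
      have hex := add_one_le_exp x
      have hmul : exp x * exp (-x) = 1 := by rw [← exp_add]; simp
      rw [div_le_iff₀ (by linarith)]
      field_simp
      nlinarith [exp_pos (-x)]

theorem pG_nonneg (n : ℕ) (k : ℤ) : 0 ≤ pG n k := by
  unfold pG
  split_ifs <;> positivity

theorem tailSum_nonneg (C3 : ℝ) (n : ℕ) : 0 ≤ tailSum C3 n :=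
  sum_nonneg fun _ _ => mul_nonneg (pG_nonneg _ _) (exp_pos _).le

theorem pG_four_mul_sub {h : ℕ} {j : ℤ} (hj : |j| ≤ h) :
    pG (4 * h) (h - j) = ((2 * h).choose (h - j.natAbs) : ℝ) ^ 2 / (2 * h).centralBinom := by
  rw [abs_le] at hj
  have hchoose : (2 * h).choose (h - j).toNat = (2 * h).choose (h - j.natAbs) := by
    rcases le_total 0 j with hj0 | hj0
    · congr 1; omega
    · exact Nat.choose_symm_of_eq_add (by omega)
  rw [pG, if_pos (by omega), Nat.centralBinom_eq_two_mul_choose, show 4 * h / 2 = 2 * h by omega,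
    hchoose, show 2 * (2 * h) = 4 * h by ring]

theorem pG_four_mul_sub_le {h : ℕ} (hh : h ≠ 0) {j : ℤ} (hj : |j| ≤ h) :
    pG (4 * h) (h - j) ≤ 32 / √h * exp (-(2 * |(j : ℝ)| ^ 2 / (h + |(j : ℝ)|))) := by
  have hchoose := choose_sub_le_centralBinom_mul_exp (h := h) (a := j.natAbs)
    (by rw [Int.abs_eq_natAbs] at hj; omega)
  rw [Nat.cast_natAbs, Int.cast_abs] at hchoose
  rw [pG_four_mul_sub hj]
  calc ((2 * h).choose (h - j.natAbs) : ℝ) ^ 2 / (2 * h).centralBinom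
      ≤ (h.centralBinom * exp (-(|(j : ℝ)| ^ 2 / (h + |(j : ℝ)|)))) ^ 2 / (2 * h).centralBinom := by
        gcongr
    _ = (h.centralBinom : ℝ) ^ 2 / (2 * h).centralBinom
          * exp (-(2 * |(j : ℝ)| ^ 2 / (h + |(j : ℝ)|))) := by
        rw [mul_pow, ← exp_nat_mul]; push_cast; ring_nf
    _ ≤ 32 / √h * exp (-(2 * |(j : ℝ)| ^ 2 / (h + |(j : ℝ)|))) := by
        gcongr ?_ * _
        exact centralBinom_sq_div_centralBinom_two_mul_le hh

theorem t0_sq (n : ℕ) : t0 n ^ 2 = n * √(log n) := by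
  rw [t0, mul_pow, sq_sqrt (Nat.cast_nonneg _), ← rpow_natCast,
    ← rpow_mul (log_natCast_nonneg n), sqrt_eq_rpow]
  norm_num

theorem sqrt_le_t0 {n : ℕ} (hL : 1 ≤ log n) : √n ≤ t0 n :=
  le_mul_of_one_le_right (sqrt_nonneg _) (one_le_rpow hL (by norm_num))

theorem tail_exponent_le {h a L : ℝ} (hh : 0 < h) (hL : 5 ≤ L) (ha : a ≤ h / 2)
    (hsq : 4 * h * √L ≤ a ^ 2) (hlin : 2 * √h ≤ a) :
    -(2 * a ^ 2 / (h + a)) + 16 * a ^ 2 / (4 * h * L) ≤ -√L - a / (2 * √h) := by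
  have hsh : 0 < √h := sqrt_pos.mpr hh
  have ha0 : 0 < a := by linarith
  have hgauss : -(2 * a ^ 2 / (h + a)) + 16 * a ^ 2 / (4 * h * L) ≤ -(a ^ 2 / (2 * h)) := by
    have h1 : 4 * a ^ 2 / (3 * h) ≤ 2 * a ^ 2 / (h + a) := by
      rw [div_le_div_iff₀ (by positivity) (by positivity)]; nlinarith
    have h2 : 16 * a ^ 2 / (4 * h * L) ≤ 4 * a ^ 2 / (5 * h) := by
      rw [div_le_div_iff₀ (by positivity) (by positivity)]
      nlinarith [mul_le_mul_of_nonneg_left hL (by positivity : 0 ≤ a ^ 2 * h)]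
    have h3 : 4 * a ^ 2 / (3 * h) - 4 * a ^ 2 / (5 * h) = 8 / 15 * (a ^ 2 / h) := by
      field_simp; ring
    have h4 : a ^ 2 / (2 * h) = 1 / 2 * (a ^ 2 / h) := by field_simp
    nlinarith [div_nonneg (sq_nonneg a) hh.le]
  have hsqrtL : √L ≤ a ^ 2 / (4 * h) := by rw [le_div_iff₀ (by positivity)]; linarith
  have hlinear : a / (2 * √h) ≤ a ^ 2 / (4 * h) := by
    have hsqh : a * (4 * h) = 2 * (a * √h) * (2 * √h) := by
      linear_combination (-4 * a) * mul_self_sqrt hh.le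
    rw [div_le_div_iff₀ (by positivity) (by positivity), hsqh]
    nlinarith [mul_le_mul_of_nonneg_left hlin (mul_nonneg ha0.le hsh.le)]
  have hsplit : a ^ 2 / (2 * h) = a ^ 2 / (4 * h) + a ^ 2 / (4 * h) := by field_simp; ring
  linarith

theorem tailSum_summand_le {h : ℕ} (hh : h ≠ 0) (hL : 5 ≤ log ((4 * h : ℕ) : ℝ)) {j : ℤ}
    (hj : t0 (4 * h) < |(j : ℝ)| ∧ |(j : ℝ)| ≤ ((4 * h : ℕ) : ℝ) / 8) :
    pG (4 * h) (((4 * h / 4 : ℕ) : ℤ) - j)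
        * exp (16 * (j : ℝ) ^ 2 / (1 * ((4 * h : ℕ) : ℝ) * log ((4 * h : ℕ) : ℝ)))
      ≤ 32 / √h * exp (-√(log ((4 * h : ℕ) : ℝ))) * exp (-(1 / (2 * √h) * |(j : ℝ)|)) := by
  obtain ⟨ht0, hjn⟩ := hj
  rw [Nat.mul_div_cancel_left h four_pos, ← sq_abs]
  have ht0sq := t0_sq (4 * h)
  have ht0ge := sqrt_le_t0 (n := 4 * h) (by linarith)
  push_cast at hL hjn ht0sq ht0ge ⊢
  have hhR : (0 : ℝ) < h := by positivity
  have hjh : |j| ≤ h := by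
    have : ((|j| : ℤ) : ℝ) ≤ ((h : ℤ) : ℝ) := by push_cast; linarith
    exact_mod_cast this
  have hsq : 4 * h * √(log (4 * h)) ≤ |(j : ℝ)| ^ 2 := by
    nlinarith [(sqrt_nonneg _).trans ht0ge]
  have hlin : 2 * √h ≤ |(j : ℝ)| := by
    rw [sqrt_mul (by norm_num), show (4 : ℝ) = 2 ^ 2 by norm_num, sqrt_sq (by norm_num)] at ht0ge
    linarith
  have hexp := tail_exponent_le hhR hL (by linarith) hsq hlin
  calc pG (4 * h) (h - j) * exp (16 * |(j : ℝ)| ^ 2 / (1 * (4 * h) * log (4 * h)))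
      ≤ 32 / √h * exp (-(2 * |(j : ℝ)| ^ 2 / (h + |(j : ℝ)|)))
          * exp (16 * |(j : ℝ)| ^ 2 / (4 * h * log (4 * h))) := by
        rw [one_mul]
        gcongr
        exact pG_four_mul_sub_le hh hjh
    _ ≤ 32 / √h * exp (-√(log (4 * h)) - |(j : ℝ)| / (2 * √h)) := by
        rw [mul_assoc, ← exp_add]
        gcongr
    _ = 32 / √h * exp (-√(log (4 * h))) * exp (-(1 / (2 * √h) * |(j : ℝ)|)) := by
        rw [mul_assoc, ← exp_add]
        ring_nf

theorem tailSum_one_four_mul_le {h : ℕ} (hh : h ≠ 0) (hL : 5 ≤ log ((4 * h : ℕ) : ℝ)) :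
    tailSum 1 (4 * h) ≤ 160 * exp (-√(log ((4 * h : ℕ) : ℝ))) := by
  have hsh : 1 ≤ √(h : ℝ) := one_le_sqrt.mpr (by exact_mod_cast Nat.one_le_iff_ne_zero.mpr hh)
  rw [tailSum]
  refine (sum_le_sum fun j hj => tailSum_summand_le hh hL (mem_filter.mp hj).2).trans ?_
  rw [← mul_sum]
  calc _ ≤ 32 / √h * exp (-√(log ((4 * h : ℕ) : ℝ))) * (1 + 2 / (1 / (2 * √h))) := by
        gcongr
        exact sum_exp_neg_mul_abs_le _ (by positivity)
    _ = 32 / √h * (1 + 2 / (1 / (2 * √h))) * exp (-√(log ((4 * h : ℕ) : ℝ))) := by ring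
    _ ≤ 160 * exp (-√(log ((4 * h : ℕ) : ℝ))) := by
        have hfac : 32 / √h * (1 + 2 / (1 / (2 * √h))) = 32 / √h + 128 := by field_simp; ring
        have hdiv : 32 / √h ≤ 32 := div_le_self (by norm_num) hsh
        gcongr
        linarith

theorem tendsto_sqrt_log_natCast_atTop : Tendsto (fun n : ℕ => √(log n)) atTop atTop :=
  tendsto_sqrt_atTop.comp (tendsto_log_atTop.comp tendsto_natCast_atTop_atTop)

theorem eventually_tailSum_one_le :
    ∀ᶠ n : ℕ in atTop, 4 ∣ n → tailSum 1 n ≤ exp (-(1 / 2) * √(log n)) := by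
  have hlog : ∀ᶠ n : ℕ in atTop, 5 ≤ log n :=
    (tendsto_log_atTop.comp tendsto_natCast_atTop_atTop).eventually_ge_atTop 5
  have hexp : ∀ᶠ n : ℕ in atTop, 160 ≤ exp (1 / 2 * √(log n)) :=
    (tendsto_exp_atTop.comp (tendsto_sqrt_log_natCast_atTop.const_mul_atTop one_half_pos))
      |>.eventually_ge_atTop 160
  filter_upwards [hlog, hexp, eventually_ne_atTop 0] with n hlog hexp hn
  rintro ⟨h, rfl⟩
  calc tailSum 1 (4 * h) ≤ 160 * exp (-√(log ((4 * h : ℕ) : ℝ))) :=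
        tailSum_one_four_mul_le (by omega) hlog
    _ ≤ exp (1 / 2 * √(log ((4 * h : ℕ) : ℝ))) * exp (-√(log ((4 * h : ℕ) : ℝ))) := by gcongr
    _ = exp (-(1 / 2) * √(log ((4 * h : ℕ) : ℝ))) := by rw [← exp_add]; ring_nf

theorem tail_sum_small :
    ∃ C3 : ℝ, 0 < C3 ∧ ∃ c : ℝ, 0 < c ∧
      (∃ N : ℕ, ∀ n : ℕ, N ≤ n → 4 ∣ n →
          tailSum C3 n ≤ Real.exp (-c * Real.sqrt (Real.log n))) ∧
      Tendsto (fun k : ℕ => tailSum C3 (4 * k)) atTop (nhds 0) := by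
  refine ⟨1, one_pos, 1 / 2, one_half_pos, eventually_atTop.mp eventually_tailSum_one_le, ?_⟩
  have hfour : Tendsto (fun k : ℕ => 4 * k) atTop atTop :=
    tendsto_id.const_mul_atTop' four_pos
  have hbound : Tendsto (fun n : ℕ => exp (-(1 / 2) * √(log n))) atTop (nhds 0) := by
    refine (tendsto_exp_neg_atTop_nhds_zero.comp
      (tendsto_sqrt_log_natCast_atTop.const_mul_atTop one_half_pos)).congr fun n => ?_
    simp only [Function.comp_apply, neg_mul]
  refine tendsto_of_tendsto_of_tendsto_of_le_of_le' tendsto_const_nhds (hbound.comp hfour)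
    (Eventually.of_forall fun k => tailSum_nonneg 1 (4 * k)) ?_
  filter_upwards [hfour.eventually eventually_tailSum_one_le] with k hk
  exact hk (dvd_mul_right 4 k)
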